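/- Let G be a finite group with internal direct decomposition G = H·K, and H₀ ⊴ G with H₀ ≅ H and G/H₀ ≅ K. Then Z(G/H₀) = (Z(G)·H₀)/H₀. -/
import Mathlib
open scoped Pointwise

/-- A multiplicative equivalence restricts to an equivalence of centers. -/
def centerEquivOfMulEquiv {A B : Type*} [Group A] [Group B] (e : A ≃* B) :
    Subgroup.center A ≃ Subgroup.center B where
  toFun z := ⟨e z, Subgroup.mem_center_iff.mpr fun b => by
    obtain ⟨a, rfl⟩ := e.surjective b
    rw [← map_mul, ← map_mul, Subgroup.mem_center_iff.mp z.2]⟩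
  invFun z := ⟨e.symm z, Subgroup.mem_center_iff.mpr fun a => by
    obtain ⟨b, rfl⟩ := e.symm.surjective a
    rw [← map_mul, ← map_mul, Subgroup.mem_center_iff.mp z.2]⟩
  left_inv z := by ext; simp
  right_inv z := by ext; simp

theorem subgroup_eq_of_le_of_card_le' {G : Type*} [Group G] {A B : Subgroup G}
    [Finite B] (h : A ≤ B) (hc : Nat.card B ≤ Nat.card A) : A = B := by
  apply SetLike.coe_injective
  refine Set.eq_of_subset_of_ncard_le h ?_ (Set.toFinite _)
  simpa [← Nat.card_coe_set_eq] using hc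

/-- If `G` is the internal direct product of `H` and `K`, the product of a central element
of `H` and a central element of `K` is central in `G`. -/
theorem mul_mem_center_aux {G : Type*} [Group G] (H K : Subgroup G) (hH : H.Normal)
    (hK : K.Normal) (hHK : H ⊓ K = ⊥) (hsup : H ⊔ K = ⊤)
    (h : H) (k : K) (hh : h ∈ Subgroup.center H) (hk : k ∈ Subgroup.center K) :
    (h : G) * (k : G) ∈ Subgroup.center G := by
  have hcomm : ∀ x y : G, x ∈ H → y ∈ K → Commute x y := fun x y hx hy =>
    Subgroup.commute_of_normal_of_disjoint H K hH hK (disjoint_iff.mpr hHK) x y hx hy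
  rw [Subgroup.mem_center_iff]
  intro g
  have hg : g ∈ (H : Set G) * (K : Set G) := by
    rw [← Subgroup.mul_normal H K, hsup]; trivial
  obtain ⟨a, ha, b, hb, rfl⟩ := hg
  have c1 : Commute a (h : G) :=
    congrArg Subtype.val (Subgroup.mem_center_iff.mp hh ⟨a, ha⟩)
  have c2 : Commute b (h : G) := (hcomm (h : G) b h.2 hb).symm
  have c3 : Commute a (k : G) := hcomm a (k : G) ha k.2
  have c4 : Commute b (k : G) :=
    congrArg Subtype.val (Subgroup.mem_center_iff.mp hk ⟨b, hb⟩)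
  exact ((c1.mul_right c3).mul_left (c2.mul_right c4) : Commute (a * b) _)

theorem center_of_quotient_eq_image_center
    {G : Type*} [Group G] [Finite G]
    (H K : Subgroup G) (hH : H.Normal) (hK : K.Normal)
    (hHK : H ⊓ K = ⊥) (hsup : H ⊔ K = ⊤)
    (H₀ : Subgroup G) [H₀.Normal]
    (h₁ : Nonempty (H₀ ≃* H)) (h₂ : Nonempty ((G ⧸ H₀) ≃* K)) :
    Subgroup.center (G ⧸ H₀) = (Subgroup.center G).map (QuotientGroup.mk' H₀) := by
  obtain ⟨e₁⟩ := h₁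
  obtain ⟨e₂⟩ := h₂
  -- the image of the center is contained in the center of the quotient
  have hle : (Subgroup.center G).map (QuotientGroup.mk' H₀) ≤ Subgroup.center (G ⧸ H₀) := by
    rintro x hx
    obtain ⟨z, hz, rfl⟩ := hx
    rw [Subgroup.mem_center_iff]
    intro g
    obtain ⟨g, rfl⟩ := QuotientGroup.mk'_surjective H₀ g
    rw [← map_mul, ← map_mul, Subgroup.mem_center_iff.mp hz g]
  -- set up the restricted homomorphism
  set f : Subgroup.center G →* G ⧸ H₀ :=
    (QuotientGroup.mk' H₀).comp (Subgroup.center G).subtype with hf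
  have hrange : f.range = (Subgroup.center G).map (QuotientGroup.mk' H₀) := by
    rw [hf, MonoidHom.range_comp, Subgroup.range_subtype]
  -- |range f| * |ker f| = |Z(G)|
  have hcard1 : Nat.card f.range * Nat.card f.ker = Nat.card (Subgroup.center G) := by
    rw [← Nat.card_congr (QuotientGroup.quotientKerEquivRange f).toEquiv]
    exact (Subgroup.card_eq_card_quotient_mul_card_subgroup f.ker).symm
  -- |ker f| ≤ |Z(H₀)|
  have hker : Nat.card f.ker ≤ Nat.card (Subgroup.center H₀) := by
    have hmem : ∀ x : f.ker, ((x : Subgroup.center G) : G) ∈ H₀ := by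
      intro x
      have hx : QuotientGroup.mk' H₀ ((x : Subgroup.center G) : G) = 1 := x.2
      exact (QuotientGroup.eq_one_iff _).mp hx
    refine Nat.card_le_card_of_injective
      (fun x => (⟨⟨((x : Subgroup.center G) : G), hmem x⟩,
        Subgroup.mem_center_iff.mpr fun h₀ => by
          ext
          exact Subgroup.mem_center_iff.mp (x : Subgroup.center G).2 h₀⟩ :
        Subgroup.center H₀)) ?_
    intro x y hxy
    have h' := congrArg (fun z : Subgroup.center H₀ => ((z : H₀) : G)) hxy
    exact Subtype.ext (Subtype.ext h')
  -- |Z(H₀)| = |Z(H)|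
  have hZH : Nat.card (Subgroup.center H₀) = Nat.card (Subgroup.center H) :=
    Nat.card_congr (centerEquivOfMulEquiv e₁)
  -- |Z(G/H₀)| = |Z(K)|
  have hZK : Nat.card (Subgroup.center (G ⧸ H₀)) = Nat.card (Subgroup.center K) :=
    Nat.card_congr (centerEquivOfMulEquiv e₂)
  -- |Z(H)| * |Z(K)| ≤ |Z(G)|
  have hprod : Nat.card (Subgroup.center H) * Nat.card (Subgroup.center K) ≤
      Nat.card (Subgroup.center G) := by
    rw [← Nat.card_prod]
    refine Nat.card_le_card_of_injective
      (fun p => (⟨(p.1.1 : G) * (p.2.1 : G),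
        mul_mem_center_aux H K hH hK hHK hsup p.1.1 p.2.1 p.1.2 p.2.2⟩ :
        Subgroup.center G)) ?_
    rintro ⟨⟨h₁', hh₁⟩, ⟨k₁, hk₁⟩⟩ ⟨⟨h₂', hh₂⟩, ⟨k₂, hk₂⟩⟩ hxy
    have heq : (h₁' : G) * k₁ = (h₂' : G) * k₂ := by
      simpa [Subtype.ext_iff] using hxy
    have key : (h₂' : G)⁻¹ * h₁' ∈ H ⊓ K := by
      constructor
      · exact H.mul_mem (H.inv_mem h₂'.2) h₁'.2
      · have : (h₂' : G)⁻¹ * h₁' = (k₂ : G) * k₁⁻¹ := by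
          have h2 := congrArg (fun x => (h₂' : G)⁻¹ * x * (k₁ : G)⁻¹) heq
          simpa [mul_assoc] using h2
        rw [this]
        exact K.mul_mem k₂.2 (K.inv_mem k₁.2)
    rw [hHK, Subgroup.mem_bot] at key
    have hhe : (h₁' : G) = h₂' := (inv_mul_eq_one.mp key).symm
    have hke : (k₁ : G) = k₂ := by
      have := heq
      rw [hhe] at this
      exact mul_left_cancel this
    simp only [Prod.mk.injEq]
    exact ⟨Subtype.ext (Subtype.ext hhe), Subtype.ext (Subtype.ext hke)⟩
  -- conclude : |Z(G/H₀)| ≤ |range f|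
  have hkerpos : 0 < Nat.card f.ker := Nat.card_pos
  have hmain : Nat.card (Subgroup.center (G ⧸ H₀)) ≤ Nat.card f.range := by
    rw [hZK]
    refine Nat.le_of_mul_le_mul_right ?_ hkerpos
    calc Nat.card (Subgroup.center K) * Nat.card f.ker
        ≤ Nat.card (Subgroup.center K) * Nat.card (Subgroup.center H₀) :=
          Nat.mul_le_mul_left _ hker
      _ = Nat.card (Subgroup.center H) * Nat.card (Subgroup.center K) := by
          rw [hZH, Nat.mul_comm]
      _ ≤ Nat.card (Subgroup.center G) := hprod
      _ = Nat.card f.range * Nat.card f.ker := hcard1.symm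
  rw [← hrange] at hle ⊢
  exact (subgroup_eq_of_le_of_card_le' hle hmain).symm
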